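/- Let L̂ be a symmetric n×n matrix with λ Id ≤ L̂ ≤ Λ Id and L̂_{in} = L̂_{ni} = 0 for i < n. Let M be a symmetric n×n matrix whose top-left (n−1)×(n−1) block M' satisfies M' ≥ −K Id_{n−1} for some K ≥ 0, and suppose tr(L̂ M) ≤ 0. Then M_{nn} ≤ K (n−1) Λ / λ. In particular, semiconvexity in the tangential directions together with the supersolution property tr(L̂ D²u) ≤ 0 implies semiconcavity in the normal direction, with constant C = (n−1)Λ/λ times the semiconvexity constant. -/

import Mathlib

/-! Since `L̂` has no mixed entries, `tr(L̂ M) = tr(L̂' M') + L̂ₙₙ Mₙₙ`. As `L̂' ≥ 0` and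
`M' + K Id ≥ 0`, the product `L̂' (M' + K Id)` has nonnegative trace, so
`tr(L̂' M') ≥ -K tr L̂' ≥ -K (n-1) Λ`. Hence `L̂ₙₙ Mₙₙ ≤ K (n-1) Λ`, and `L̂ₙₙ ≥ λ` gives the bound. -/

open Matrix

namespace Matrix

open scoped ComplexOrder

section PosSemidef

variable {n 𝕜 : Type*} [RCLike 𝕜] [DecidableEq n] {A B : Matrix n n 𝕜} {c : 𝕜}

theorem PosSemidef.of_sub_smul_one (hc : 0 ≤ c) (h : (A - c • 1).PosSemidef) :
    A.PosSemidef := by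
  simpa using h.add (PosSemidef.one.smul hc)

theorem PosSemidef.le_diag_of_sub_smul_one (h : (A - c • 1).PosSemidef) (i : n) : c ≤ A i i := by
  simpa [sub_nonneg] using h.diag_nonneg (i := i)

theorem PosSemidef.diag_le_of_smul_one_sub (h : (c • 1 - A).PosSemidef) (i : n) : A i i ≤ c := by
  simpa [sub_nonneg] using h.diag_nonneg (i := i)

variable [Fintype n]

theorem PosSemidef.trace_le_of_smul_one_sub (h : (c • 1 - A).PosSemidef) :
    A.trace ≤ Fintype.card n * c := by
  simpa [trace] using Finset.sum_le_sum fun i (_ : i ∈ Finset.univ) => h.diag_le_of_smul_one_sub i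

open scoped MatrixOrder in
theorem PosSemidef.trace_mul_nonneg (hA : A.PosSemidef) (hB : B.PosSemidef) :
    0 ≤ (A * B).trace := by
  obtain ⟨C, rfl⟩ := CStarAlgebra.nonneg_iff_eq_star_mul_self.mp hB.nonneg
  rw [← Matrix.mul_assoc, trace_mul_cycle]
  exact (hA.mul_mul_conjTranspose_same C).trace_nonneg

theorem PosSemidef.neg_mul_trace_le_trace_mul (hA : A.PosSemidef)
    (hB : (B + c • 1).PosSemidef) : -c * A.trace ≤ (A * B).trace := by
  have h := hA.trace_mul_nonneg hB
  rw [Matrix.mul_add, trace_add, Matrix.mul_smul, Matrix.mul_one, trace_smul, smul_eq_mul] at h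
  rwa [neg_mul, neg_le_iff_add_nonneg]

end PosSemidef

theorem trace_mul_eq_trace_mul_submatrix_castSucc_add {n : ℕ} {R : Type*}
    [NonUnitalNonAssocSemiring R] {L M : Matrix (Fin (n + 1)) (Fin (n + 1)) R}
    (hcol : ∀ i : Fin n, L i.castSucc (Fin.last n) = 0)
    (hrow : ∀ i : Fin n, L (Fin.last n) i.castSucc = 0) :
    (L * M).trace =
      (L.submatrix Fin.castSucc Fin.castSucc * M.submatrix Fin.castSucc Fin.castSucc).trace
        + L (Fin.last n) (Fin.last n) * M (Fin.last n) (Fin.last n) := by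
  simp [trace, mul_apply, Fin.sum_univ_castSucc, hcol, hrow]

end Matrix

theorem le_div_of_le_of_mul_le {a b c x : ℝ} (ha : 0 < a) (hab : a ≤ b) (hc : 0 ≤ c)
    (h : b * x ≤ c) : x ≤ c / a :=
  ((le_div_iff₀' (ha.trans_le hab)).mpr h).trans (div_le_div_of_nonneg_left hc ha hab)

theorem stmt_3_general (n : ℕ) (lam Lam K : ℝ) (hlam : 0 < lam) (hK : 0 ≤ K)
    (L M : Matrix (Fin (n+1)) (Fin (n+1)) ℝ)
    (hlow : (L - lam • (1 : Matrix (Fin (n+1)) (Fin (n+1)) ℝ)).PosSemidef)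
    (hup : ((Lam • (1 : Matrix (Fin (n+1)) (Fin (n+1)) ℝ)) - L).PosSemidef)
    (hmix : ∀ i : Fin n, L i.castSucc (Fin.last n) = 0 ∧ L (Fin.last n) i.castSucc = 0)
    (hM : (M.submatrix Fin.castSucc Fin.castSucc + K • (1 : Matrix (Fin n) (Fin n) ℝ)).PosSemidef)
    (htr : (L * M).trace ≤ 0) :
    M (Fin.last n) (Fin.last n) ≤ K * n * Lam / lam := by
  set L' := L.submatrix Fin.castSucc Fin.castSucc
  have hLnn : lam ≤ L (Fin.last n) (Fin.last n) := hlow.le_diag_of_sub_smul_one _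
  have hLam : 0 ≤ Lam := hlam.le.trans (hLnn.trans (hup.diag_le_of_smul_one_sub _))
  have hL' : L'.PosSemidef := (hlow.of_sub_smul_one hlam.le).submatrix _
  have htrL' : L'.trace ≤ n * Lam := by
    have hup' := hup.submatrix Fin.castSucc
    simp only [submatrix_sub, submatrix_smul, Pi.sub_apply, Pi.smul_apply,
      submatrix_one _ (Fin.castSucc_injective n)] at hup'
    simpa using hup'.trace_le_of_smul_one_sub
  have hLM' := hL'.neg_mul_trace_le_trace_mul hM
  rw [trace_mul_eq_trace_mul_submatrix_castSucc_add (fun i => (hmix i).1)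
    (fun i => (hmix i).2)] at htr
  refine le_div_of_le_of_mul_le hlam hLnn (by positivity) ?_
  linarith [mul_le_mul_of_nonneg_left htrL' hK]

/-- if `L̂` is symmetric with `λ Id ≤ L̂ ≤ Λ Id` and vanishing mixed `n`-entries,
`M` is symmetric with tangential block `M' ≥ −K Id`, and `tr(L̂ M) ≤ 0`, then
`M_{nn} ≤ K (n−1) Λ / λ` (here the dimension is `n+1`, so `n` tangential directions). -/
theorem stmt_3 (n : ℕ) (lam Lam K : ℝ) (hlam : 0 < lam) (hLam : lam ≤ Lam) (hK : 0 ≤ K)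
    (L M : Matrix (Fin (n+1)) (Fin (n+1)) ℝ) (hLsym : L.IsSymm)
    (hlow : (L - lam • (1 : Matrix (Fin (n+1)) (Fin (n+1)) ℝ)).PosSemidef)
    (hup : ((Lam • (1 : Matrix (Fin (n+1)) (Fin (n+1)) ℝ)) - L).PosSemidef)
    (hmix : ∀ i : Fin n, L i.castSucc (Fin.last n) = 0 ∧ L (Fin.last n) i.castSucc = 0)
    (hMsym : M.IsSymm)
    (hM : (M.submatrix Fin.castSucc Fin.castSucc + K • (1 : Matrix (Fin n) (Fin n) ℝ)).PosSemidef)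
    (htr : (L * M).trace ≤ 0) :
    M (Fin.last n) (Fin.last n) ≤ K * n * Lam / lam :=
  stmt_3_general n lam Lam K hlam hK L M hlow hup hmix hM htr
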